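/- arXiv:1903.01607 — 5 statements merged into one kernel-verified Lean document; each statement's English description precedes it below -/
import Mathlib

section
/- Let h : ℝⁿ → ℝ satisfy h(λx) = λ h(x) and h(x + y) ≤ h(x) + h(y) for all x, y ∈ ℝⁿ and λ ≥ 0 (i.e., h is sublinear). Then the set A_h = {t ∈ ℝⁿ : ⟨t, x⟩ ≤ h(x) for all x ∈ ℝⁿ} is a nonempty compact convex subset of ℝⁿ whose support function equals h, i.e., sup_{a ∈ A_h} ⟨a, x⟩ = h(x) for all x ∈ ℝⁿ. -/
/-!
The set `A_h` is an intersection of closed half-spaces, hence closed and convex. It is bounded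
because `h`, being convex on a finite-dimensional space, is continuous and therefore bounded on
the unit ball. For the support function, Hahn–Banach extends `c • x₀ ↦ c * h x₀` from the line
through `x₀` to a linear functional dominated by `h`; its Riesz representative lies in `A_h` and
attains `h x₀` at `x₀`, while `⟪t, x₀⟫ ≤ h x₀` for every `t ∈ A_h` by definition.
-/

open scoped RealInnerProductSpace

section Sublinear

variable {E : Type*} [AddCommGroup E] [Module ℝ E] {h : E → ℝ}

theorem map_zero_of_posHomogeneous (hpos : ∀ c : ℝ, 0 < c → ∀ x, h (c • x) = c * h x) :
    h 0 = 0 := by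
  have h2 := hpos 2 two_pos 0
  rw [smul_zero] at h2
  linarith

theorem neg_map_neg_le_of_sublinear (hpos : ∀ c : ℝ, 0 < c → ∀ x, h (c • x) = c * h x)
    (hsub : ∀ x y, h (x + y) ≤ h x + h y) (x : E) : -h (-x) ≤ h x := by
  have hx := hsub x (-x)
  rw [add_neg_cancel, map_zero_of_posHomogeneous hpos] at hx
  linarith

theorem convexOn_univ_of_sublinear (hpos : ∀ c : ℝ, 0 < c → ∀ x, h (c • x) = c * h x)
    (hsub : ∀ x y, h (x + y) ≤ h x + h y) : ConvexOn ℝ Set.univ h := by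
  have h0 := map_zero_of_posHomogeneous hpos
  have hnonneg : ∀ c : ℝ, 0 ≤ c → ∀ x, h (c • x) = c * h x := by
    intro c hc x
    rcases hc.eq_or_lt with rfl | hc
    · simp [h0]
    · exact hpos c hc x
  refine ⟨convex_univ, fun x _ y _ a b ha hb _ => ?_⟩
  calc h (a • x + b • y) ≤ h (a • x) + h (b • y) := hsub _ _
    _ = a • h x + b • h y := by rw [hnonneg a ha, hnonneg b hb, smul_eq_mul, smul_eq_mul]

theorem exists_linearMap_eq_and_le_of_sublinear
    (hpos : ∀ c : ℝ, 0 < c → ∀ x, h (c • x) = c * h x)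
    (hsub : ∀ x y, h (x + y) ≤ h x + h y) (x₀ : E) :
    ∃ g : E →ₗ[ℝ] ℝ, g x₀ = h x₀ ∧ ∀ x, g x ≤ h x := by
  have h0 := map_zero_of_posHomogeneous hpos
  have hker : ∀ c : ℝ, c • x₀ = 0 → c • h x₀ = 0 := by
    intro c hc
    rcases smul_eq_zero.mp hc with rfl | rfl
    · exact zero_smul _ _
    · rw [h0, smul_zero]
  let f := LinearPMap.mkSpanSingleton' (σ := RingHom.id ℝ) x₀ (h x₀) hker
  have hf : ∀ x : f.domain, f x ≤ h x := by
    rintro ⟨_, hx⟩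
    obtain ⟨c, rfl⟩ := Submodule.mem_span_singleton.mp hx
    rw [LinearPMap.mkSpanSingleton'_apply, smul_eq_mul]
    rcases lt_trichotomy c 0 with hc | rfl | hc
    · calc c * h x₀ = -h (-(c • x₀)) := by rw [← neg_smul, hpos (-c) (neg_pos.mpr hc)]; ring
        _ ≤ h (c • x₀) := neg_map_neg_le_of_sublinear hpos hsub _
    · simp [h0]
    · exact (hpos c hc x₀).ge
  obtain ⟨g, hgf, hgh⟩ := exists_extension_of_le_sublinear f h hpos hsub hf
  refine ⟨g, ?_, hgh⟩
  rw [hgf ⟨x₀, Submodule.mem_span_singleton_self x₀⟩]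
  exact LinearPMap.mkSpanSingleton'_apply_self _ _ _ _

end Sublinear

section InnerProductSpace

variable {E : Type*} [NormedAddCommGroup E] [InnerProductSpace ℝ E]

theorem isClosed_setOf_forall_inner_le (h : E → ℝ) : IsClosed {t : E | ∀ x, ⟪t, x⟫ ≤ h x} := by
  simp_rw [Set.ofPred_forall]
  exact isClosed_iInter fun x => isClosed_le (continuous_id.inner continuous_const) continuous_const

theorem convex_setOf_forall_inner_le (h : E → ℝ) : Convex ℝ {t : E | ∀ x, ⟪t, x⟫ ≤ h x} := by
  simp_rw [Set.ofPred_forall]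
  exact convex_iInter fun x =>
    convex_halfSpace_le ⟨fun _ _ => inner_add_left _ _ _, fun _ _ => real_inner_smul_left _ _ _⟩ _

theorem norm_le_of_forall_mem_closedBall_inner_le {t : E} {C : ℝ}
    (hC : ∀ x ∈ Metric.closedBall (0 : E) 1, ⟪t, x⟫ ≤ C) : ‖t‖ ≤ C := by
  rcases eq_or_ne t 0 with rfl | ht
  · simpa using hC 0 (Metric.mem_closedBall_self zero_le_one)
  have hnorm : 0 < ‖t‖ := norm_pos_iff.mpr ht
  have hunit : ‖t‖⁻¹ • t ∈ Metric.closedBall (0 : E) 1 := by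
    rw [mem_closedBall_zero_iff, norm_smul, norm_inv, norm_norm, inv_mul_cancel₀ hnorm.ne']
  calc ‖t‖ = ⟪t, ‖t‖⁻¹ • t⟫ := by
        rw [real_inner_smul_right, real_inner_self_eq_norm_sq]; field_simp
    _ ≤ C := hC _ hunit

variable [FiniteDimensional ℝ E] {h : E → ℝ}

theorem isBounded_setOf_forall_inner_le (hpos : ∀ c : ℝ, 0 < c → ∀ x, h (c • x) = c * h x)
    (hsub : ∀ x y, h (x + y) ≤ h x + h y) :
    Bornology.IsBounded {t : E | ∀ x, ⟪t, x⟫ ≤ h x} := by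
  have hcont : ContinuousOn h Set.univ :=
    (convexOn_univ_of_sublinear hpos hsub).continuousOn isOpen_univ
  obtain ⟨C, hC⟩ :=
    (isCompact_closedBall (0 : E) 1).exists_bound_of_continuousOn (hcont.mono (Set.subset_univ _))
  refine isBounded_iff_forall_norm_le.mpr ⟨C, fun t ht => ?_⟩
  exact norm_le_of_forall_mem_closedBall_inner_le fun x hx =>
    (ht x).trans ((le_abs_self _).trans (hC x hx))

theorem isCompact_setOf_forall_inner_le (hpos : ∀ c : ℝ, 0 < c → ∀ x, h (c • x) = c * h x)
    (hsub : ∀ x y, h (x + y) ≤ h x + h y) :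
    IsCompact {t : E | ∀ x, ⟪t, x⟫ ≤ h x} :=
  Metric.isCompact_of_isClosed_isBounded (isClosed_setOf_forall_inner_le h)
    (isBounded_setOf_forall_inner_le hpos hsub)

theorem exists_mem_setOf_forall_inner_le_inner_eq
    (hpos : ∀ c : ℝ, 0 < c → ∀ x, h (c • x) = c * h x)
    (hsub : ∀ x y, h (x + y) ≤ h x + h y) (x₀ : E) :
    ∃ t ∈ {t : E | ∀ x, ⟪t, x⟫ ≤ h x}, ⟪t, x₀⟫ = h x₀ := by
  obtain ⟨g, hgx₀, hgh⟩ := exists_linearMap_eq_and_le_of_sublinear hpos hsub x₀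
  let t := (InnerProductSpace.toDual ℝ E).symm (LinearMap.toContinuousLinearMap g)
  have ht : ∀ x, ⟪t, x⟫ = g x := fun x => InnerProductSpace.toDual_symm_apply
  exact ⟨t, fun x => (ht x).trans_le (hgh x), (ht x₀).trans hgx₀⟩

theorem isGreatest_image_inner_setOf_forall_inner_le
    (hpos : ∀ c : ℝ, 0 < c → ∀ x, h (c • x) = c * h x)
    (hsub : ∀ x y, h (x + y) ≤ h x + h y) (x : E) :
    IsGreatest ((fun a => ⟪a, x⟫) '' {t : E | ∀ y, ⟪t, y⟫ ≤ h y}) (h x) := by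
  obtain ⟨t, ht, htx⟩ := exists_mem_setOf_forall_inner_le_inner_eq hpos hsub x
  exact ⟨⟨t, ht, htx⟩, by rintro _ ⟨s, hs, rfl⟩; exact hs x⟩

end InnerProductSpace

theorem stmt6 {n : ℕ} (h : EuclideanSpace ℝ (Fin n) → ℝ)
    (hpos : ∀ lam : ℝ, 0 ≤ lam → ∀ x, h (lam • x) = lam * h x)
    (hsub : ∀ x y, h (x + y) ≤ h x + h y) :
    ({t : EuclideanSpace ℝ (Fin n) | ∀ x, ⟪t, x⟫ ≤ h x}).Nonempty ∧
    IsCompact {t : EuclideanSpace ℝ (Fin n) | ∀ x, ⟪t, x⟫ ≤ h x} ∧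
    Convex ℝ {t : EuclideanSpace ℝ (Fin n) | ∀ x, ⟪t, x⟫ ≤ h x} ∧
    ∀ x, sSup ((fun a => ⟪a, x⟫) '' {t : EuclideanSpace ℝ (Fin n) | ∀ y, ⟪t, y⟫ ≤ h y})
      = h x := by
  have hpos' : ∀ c : ℝ, 0 < c → ∀ x, h (c • x) = c * h x := fun c hc => hpos c hc.le
  obtain ⟨t, ht, -⟩ := exists_mem_setOf_forall_inner_le_inner_eq hpos' hsub 0
  exact ⟨⟨t, ht⟩, isCompact_setOf_forall_inner_le hpos' hsub, convex_setOf_forall_inner_le h,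
    fun x => (isGreatest_image_inner_setOf_forall_inner_le hpos' hsub x).csSup_eq⟩
end

section
/- Let {A_α : α ∈ [0,1]} be a family of subsets of ℝⁿ. There exists a fuzzy vector u : ℝⁿ → [0,1] (regular, compactly supported, quasi-concave, upper semi-continuous) with u_α = A_α for all α ∈ [0,1] if and only if: (L1) each A_α is a nonempty compact convex subset of ℝⁿ; (L2) A_α ⊇ A_β whenever 0 ≤ α < β ≤ 1; (L3) A_{α₀} = ⋂_{k≥1} A_{α_k} for each increasing sequence {α_k} ⊆ [0,1] converging to α₀ > 0; (L4) A_0 is the closure of ⋃_{α ∈ (0,1]} A_α. In that case u is unique, given by u(t) = sup{α : t ∈ A_α}. -/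
open scoped RealInnerProductSpace Pointwise

noncomputable section

/-- A fuzzy vector: regular, compactly supported, quasi-concave, upper semi-continuous
function `u : ℝⁿ → [0,1]`. -/
def IsFuzzyVector {n : ℕ} (u : EuclideanSpace ℝ (Fin n) → ℝ) : Prop :=
  (∀ t, u t ∈ Set.Icc (0:ℝ) 1) ∧
  (∃ t, u t = 1) ∧
  IsCompact (closure {t | 0 < u t}) ∧
  (∀ s t : EuclideanSpace ℝ (Fin n), ∀ lam ∈ Set.Icc (0:ℝ) 1,
      min (u s) (u t) ≤ u (lam • s + (1 - lam) • t)) ∧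
  (∀ α : ℝ, IsClosed {t | α ≤ u t})

/-- The α-level sets of a fuzzy vector. -/
def levelSet {n : ℕ} (u : EuclideanSpace ℝ (Fin n) → ℝ) (α : ℝ) :
    Set (EuclideanSpace ℝ (Fin n)) :=
  if α = 0 then closure {t | 0 < u t} else {t | α ≤ u t}

/-- The support function of a fuzzy vector. -/
def fuzzySupp {n : ℕ} (u : EuclideanSpace ℝ (Fin n) → ℝ) (α : ℝ)
    (x : EuclideanSpace ℝ (Fin n)) : ℝ :=
  sSup ((fun t => ⟪t, x⟫) '' levelSet u α)

/-- Addition of fuzzy vectors by Zadeh's extension principle. -/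
def fuzzyAdd {n : ℕ} (v w : EuclideanSpace ℝ (Fin n) → ℝ) :
    EuclideanSpace ℝ (Fin n) → ℝ :=
  fun t => sSup {m : ℝ | ∃ r s, r + s = t ∧ m = min (v r) (w s)}

/-!
A fuzzy vector is recovered from its level sets by `u t = sup {α | t ∈ u_α}`, because for
`α > 0` the level set `u_α` is exactly the superlevel set `{α ≤ u}`. Conversely, given a family
satisfying (L1)–(L4), define `u` by this formula. The only delicate point is that
`β ≤ u t` forces `t ∈ A_β`: it gives `t ∈ A_α` for every `α < β`, and left continuity (L3)
along an increasing sequence `α_k → β` closes the gap. Upper semicontinuity, quasi-concavity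
and regularity of `u` are then closedness, convexity and nonemptiness of the `A_α`, while (L4)
identifies the support.
-/

open Set Filter Topology

variable {n : ℕ}

section LevelSet

variable {u : EuclideanSpace ℝ (Fin n) → ℝ}

lemma levelSet_zero (u : EuclideanSpace ℝ (Fin n) → ℝ) :
    levelSet u 0 = closure {t | 0 < u t} :=
  if_pos rfl

lemma levelSet_of_pos {α : ℝ} (hα : 0 < α) : levelSet u α = {t | α ≤ u t} :=
  if_neg hα.ne'

lemma mem_levelSet_of_pos {α : ℝ} (hα : 0 < α) {t : EuclideanSpace ℝ (Fin n)} :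
    t ∈ levelSet u α ↔ α ≤ u t := by
  rw [levelSet_of_pos hα, mem_ofPred_eq]

lemma levelSet_subset_levelSet {α β : ℝ} (hα : 0 ≤ α) (hαβ : α ≤ β) :
    levelSet u β ⊆ levelSet u α := by
  rcases hα.eq_or_lt with rfl | hα
  · rcases hαβ.eq_or_lt with rfl | hβ
    · exact subset_rfl
    · rw [levelSet_zero, levelSet_of_pos hβ]
      exact fun t ht => subset_closure (hβ.trans_le ht)
  · rw [levelSet_of_pos hα, levelSet_of_pos (hα.trans_le hαβ)]
    exact fun t ht => hαβ.trans ht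

lemma levelSet_eq_iInter_of_tendsto {a : ℕ → ℝ} {α : ℝ} (ha : ∀ k, 0 ≤ a k) (hmono : Monotone a)
    (hα : 0 < α) (hlim : Tendsto a atTop (𝓝 α)) :
    levelSet u α = ⋂ k, levelSet u (a k) := by
  refine (subset_iInter fun k => levelSet_subset_levelSet (ha k) (hmono.ge_of_tendsto hlim k))
    |>.antisymm fun t ht => ?_
  rw [mem_levelSet_of_pos hα]
  refine le_of_tendsto hlim ?_
  filter_upwards [hlim.eventually (eventually_gt_nhds hα)] with k hk
  exact (mem_levelSet_of_pos hk).1 (mem_iInter.1 ht k)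

lemma setOf_pos_eq_iUnion_levelSet (hu : ∀ t, u t ≤ 1) :
    {t | 0 < u t} = ⋃ α ∈ Ioc (0 : ℝ) 1, levelSet u α := by
  ext t
  simp only [mem_ofPred_eq, mem_iUnion, exists_prop]
  constructor
  · exact fun h => ⟨u t, ⟨h, hu t⟩, (mem_levelSet_of_pos h).2 le_rfl⟩
  · rintro ⟨α, hα, ht⟩
    exact hα.1.trans_le ((mem_levelSet_of_pos hα.1).1 ht)

lemma levelSet_zero_eq_closure_iUnion (hu : ∀ t, u t ≤ 1) :
    levelSet u 0 = closure (⋃ α ∈ Ioc (0 : ℝ) 1, levelSet u α) := by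
  rw [levelSet_zero, setOf_pos_eq_iUnion_levelSet hu]

end LevelSet

def fuzzyOfLevels {X : Type*} (A : ℝ → Set X) (t : X) : ℝ :=
  sSup {α | α ∈ Icc (0 : ℝ) 1 ∧ t ∈ A α}

section FuzzyOfLevels

variable {X : Type*} {A : ℝ → Set X}

lemma fuzzyOfLevels_mem_Icc (A : ℝ → Set X) (t : X) : fuzzyOfLevels A t ∈ Icc (0 : ℝ) 1 :=
  ⟨Real.sSup_nonneg fun _ h => h.1.1, Real.sSup_le (fun _ h => h.1.2) zero_le_one⟩

lemma fuzzyOfLevels_congr {B : ℝ → Set X} (h : ∀ α ∈ Icc (0 : ℝ) 1, A α = B α) :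
    fuzzyOfLevels A = fuzzyOfLevels B := by
  funext t
  unfold fuzzyOfLevels
  congr 1
  ext α
  exact and_congr_right fun hα => by rw [h α hα]

lemma le_fuzzyOfLevels_iff (hanti : ∀ α β : ℝ, 0 ≤ α → α < β → β ≤ 1 → A β ⊆ A α)
    (hcont : ∀ (a : ℕ → ℝ) (α₀ : ℝ), (∀ k, a k ∈ Icc (0 : ℝ) 1) → Monotone a →
      0 < α₀ → α₀ ≤ 1 → Tendsto a atTop (𝓝 α₀) → A α₀ = ⋂ k : ℕ, A (a k))
    {β : ℝ} (hβ0 : 0 < β) (hβ1 : β ≤ 1) {t : X} :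
    β ≤ fuzzyOfLevels A t ↔ t ∈ A β := by
  refine ⟨fun hle => ?_, fun ht => le_csSup ⟨1, fun _ h => h.1.2⟩ ⟨⟨hβ0.le, hβ1⟩, ht⟩⟩
  have below : ∀ α ∈ Ioo 0 β, t ∈ A α := by
    intro α hα
    obtain ⟨γ, ⟨hγ, htγ⟩, hαγ⟩ :
        ∃ γ ∈ {γ | γ ∈ Icc (0 : ℝ) 1 ∧ t ∈ A γ}, α < γ := by
      by_contra! h
      exact (hle.trans (Real.sSup_le h hα.1.le)).not_gt hα.2
    exact hanti α γ hα.1.le hαγ hγ.2 htγ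
  obtain ⟨a, ha_mono, ha_mem, ha_lim⟩ := exists_seq_strictMono_tendsto' hβ0
  rw [hcont a β (fun k => ⟨(ha_mem k).1.le, (ha_mem k).2.le.trans hβ1⟩) ha_mono.monotone
    hβ0 hβ1 ha_lim]
  exact mem_iInter.2 fun k => below _ (ha_mem k)

end FuzzyOfLevels

section FuzzyVector

variable {u : EuclideanSpace ℝ (Fin n) → ℝ}

lemma fuzzyOfLevels_levelSet {t : EuclideanSpace ℝ (Fin n)} (ht : u t ∈ Icc (0 : ℝ) 1) :
    fuzzyOfLevels (levelSet u) t = u t := by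
  have hub : ∀ α ∈ {α | α ∈ Icc (0 : ℝ) 1 ∧ t ∈ levelSet u α}, α ≤ u t := by
    rintro α ⟨hα, htα⟩
    rcases hα.1.eq_or_lt with rfl | hα0
    · exact ht.1
    · exact (mem_levelSet_of_pos hα0).1 htα
  rcases ht.1.eq_or_lt with h0 | h0
  · exact le_antisymm (Real.sSup_le hub ht.1) (h0 ▸ Real.sSup_nonneg fun _ h => h.1.1)
  · exact IsGreatest.csSup_eq ⟨⟨ht, (mem_levelSet_of_pos h0).2 le_rfl⟩, hub⟩

namespace IsFuzzyVector

lemma quasiconcaveOn (hu : IsFuzzyVector u) : QuasiconcaveOn ℝ univ u := by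
  refine quasiconcaveOn_iff_min_le.2 ⟨convex_univ, fun s _ t _ a b ha hb hab => ?_⟩
  obtain rfl : b = 1 - a := eq_sub_of_add_eq' hab
  exact hu.2.2.2.1 s t a ⟨ha, sub_nonneg.1 hb⟩

lemma convex_levelSet (hu : IsFuzzyVector u) (α : ℝ) : Convex ℝ (levelSet u α) := by
  rcases eq_or_ne α 0 with rfl | hα
  · rw [levelSet_zero]
    simpa only [mem_univ, true_and] using (hu.quasiconcaveOn.convex_gt 0).closure
  · rw [levelSet, if_neg hα]
    simpa only [mem_univ, true_and] using hu.quasiconcaveOn α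

lemma isCompact_levelSet (hu : IsFuzzyVector u) {α : ℝ} (hα : 0 ≤ α) :
    IsCompact (levelSet u α) := by
  have hK : IsCompact (levelSet u 0) := by
    rw [levelSet_zero]
    exact hu.2.2.1
  rcases hα.eq_or_lt with rfl | hα
  · exact hK
  · refine hK.of_isClosed_subset ?_ (levelSet_subset_levelSet le_rfl hα.le)
    rw [levelSet_of_pos hα]
    exact hu.2.2.2.2 α

lemma eq_fuzzyOfLevels (hu : IsFuzzyVector u) {A : ℝ → Set (EuclideanSpace ℝ (Fin n))}
    (hA : ∀ α ∈ Icc (0 : ℝ) 1, levelSet u α = A α) : u = fuzzyOfLevels A := by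
  rw [← fuzzyOfLevels_congr hA]
  exact funext fun t => (fuzzyOfLevels_levelSet (hu.1 t)).symm

end IsFuzzyVector

lemma isFuzzyVector_of_levelSet (hu : ∀ t, u t ∈ Icc (0 : ℝ) 1) (hne : (levelSet u 1).Nonempty)
    (hcpt : ∀ α ∈ Icc (0 : ℝ) 1, IsCompact (levelSet u α))
    (hconv : ∀ α ∈ Ioc (0 : ℝ) 1, Convex ℝ (levelSet u α)) :
    IsFuzzyVector u := by
  refine ⟨hu, ?_, ?_, fun s t lam hlam => ?_, fun α => ?_⟩
  · obtain ⟨t, ht⟩ := hne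
    exact ⟨t, (hu t).2.antisymm ((mem_levelSet_of_pos one_pos).1 ht)⟩
  · rw [← levelSet_zero]
    exact hcpt 0 ⟨le_rfl, zero_le_one⟩
  · set m := min (u s) (u t)
    rcases le_or_gt m 0 with hm | hm
    · exact hm.trans (hu _).1
    rw [← mem_levelSet_of_pos hm]
    exact hconv m ⟨hm, (min_le_left _ _).trans (hu s).2⟩
      ((mem_levelSet_of_pos hm).2 (min_le_left _ _))
      ((mem_levelSet_of_pos hm).2 (min_le_right _ _)) hlam.1 (sub_nonneg.2 hlam.2)
      (add_sub_cancel _ _)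
  · rcases le_or_gt α 0 with h0 | h0
    · convert isClosed_univ
      exact eq_univ_of_forall fun t => h0.trans (hu t).1
    rcases le_or_gt α 1 with h1 | h1
    · rw [← levelSet_of_pos h0]
      exact (hcpt α ⟨h0.le, h1⟩).isClosed
    · convert isClosed_empty
      exact eq_empty_of_forall_notMem fun t ht => (h1.trans_le ht).not_ge (hu t).2

end FuzzyVector

def IsLevelFamily (A : ℝ → Set (EuclideanSpace ℝ (Fin n))) : Prop :=
  (∀ α ∈ Icc (0 : ℝ) 1, (A α).Nonempty ∧ IsCompact (A α) ∧ Convex ℝ (A α)) ∧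
  (∀ α β : ℝ, 0 ≤ α → α < β → β ≤ 1 → A β ⊆ A α) ∧
  (∀ (a : ℕ → ℝ) (α₀ : ℝ), (∀ k, a k ∈ Icc (0 : ℝ) 1) → Monotone a →
    0 < α₀ → α₀ ≤ 1 → Tendsto a atTop (𝓝 α₀) → A α₀ = ⋂ k : ℕ, A (a k)) ∧
  A 0 = closure (⋃ α ∈ Ioc (0 : ℝ) 1, A α)

namespace IsLevelFamily

variable {A B : ℝ → Set (EuclideanSpace ℝ (Fin n))}

lemma congr (hA : IsLevelFamily A) (h : ∀ α ∈ Icc (0 : ℝ) 1, A α = B α) : IsLevelFamily B := by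
  obtain ⟨hL1, hL2, hL3, hL4⟩ := hA
  refine ⟨fun α hα => h α hα ▸ hL1 α hα, fun α β hα hαβ hβ => ?_,
    fun a α₀ ha hmono h0 h1 hlim => ?_, ?_⟩
  · rw [← h α ⟨hα, hαβ.le.trans hβ⟩, ← h β ⟨hα.trans hαβ.le, hβ⟩]
    exact hL2 α β hα hαβ hβ
  · rw [← h α₀ ⟨h0.le, h1⟩, hL3 a α₀ ha hmono h0 h1 hlim]
    exact iInter_congr fun k => h (a k) (ha k)
  · rw [← h 0 ⟨le_rfl, zero_le_one⟩, hL4, iUnion₂_congr fun α hα => h α (Ioc_subset_Icc_self hα)]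

lemma levelSet_fuzzyOfLevels (hA : IsLevelFamily A) {α : ℝ} (hα : α ∈ Icc (0 : ℝ) 1) :
    levelSet (fuzzyOfLevels A) α = A α := by
  obtain ⟨-, hL2, hL3, hL4⟩ := hA
  have hpos : ∀ β ∈ Ioc (0 : ℝ) 1, levelSet (fuzzyOfLevels A) β = A β := fun β hβ => by
    ext t
    rw [mem_levelSet_of_pos hβ.1]
    exact le_fuzzyOfLevels_iff hL2 hL3 hβ.1 hβ.2
  rcases hα.1.eq_or_lt with rfl | h0
  · rw [levelSet_zero_eq_closure_iUnion fun t => (fuzzyOfLevels_mem_Icc A t).2, hL4,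
      iUnion₂_congr hpos]
  · exact hpos α ⟨h0, hα.2⟩

lemma isFuzzyVector_fuzzyOfLevels (hA : IsLevelFamily A) : IsFuzzyVector (fuzzyOfLevels A) := by
  have hL1 := hA.1
  refine isFuzzyVector_of_levelSet (fuzzyOfLevels_mem_Icc A) ?_ (fun α hα => ?_)
    (fun α hα => ?_)
  · rw [hA.levelSet_fuzzyOfLevels ⟨zero_le_one, le_rfl⟩]
    exact (hL1 1 ⟨zero_le_one, le_rfl⟩).1
  · rw [hA.levelSet_fuzzyOfLevels hα]
    exact (hL1 α hα).2.1
  · rw [hA.levelSet_fuzzyOfLevels (Ioc_subset_Icc_self hα)]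
    exact (hL1 α (Ioc_subset_Icc_self hα)).2.2

end IsLevelFamily

lemma IsFuzzyVector.isLevelFamily_levelSet {u : EuclideanSpace ℝ (Fin n) → ℝ}
    (hu : IsFuzzyVector u) : IsLevelFamily (levelSet u) := by
  refine ⟨fun α hα => ⟨?_, hu.isCompact_levelSet hα.1, hu.convex_levelSet α⟩,
    fun α β hα hαβ _ => levelSet_subset_levelSet hα hαβ.le,
    fun a α₀ ha hmono h0 _ hlim => levelSet_eq_iInter_of_tendsto (fun k => (ha k).1) hmono h0 hlim,
    levelSet_zero_eq_closure_iUnion fun t => (hu.1 t).2⟩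
  obtain ⟨t, ht⟩ := hu.2.1
  exact ⟨t, levelSet_subset_levelSet hα.1 hα.2 ((mem_levelSet_of_pos one_pos).2 ht.ge)⟩

theorem stmt10 {n : ℕ} (A : ℝ → Set (EuclideanSpace ℝ (Fin n))) :
    ((∃! u : EuclideanSpace ℝ (Fin n) → ℝ,
        IsFuzzyVector u ∧ ∀ α ∈ Set.Icc (0:ℝ) 1, levelSet u α = A α) ↔
      ((∀ α ∈ Set.Icc (0:ℝ) 1, (A α).Nonempty ∧ IsCompact (A α) ∧ Convex ℝ (A α)) ∧
       (∀ α β : ℝ, 0 ≤ α → α < β → β ≤ 1 → A β ⊆ A α) ∧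
       (∀ (a : ℕ → ℝ) (α₀ : ℝ), (∀ k, a k ∈ Set.Icc (0:ℝ) 1) → Monotone a →
          0 < α₀ → α₀ ≤ 1 → Filter.Tendsto a Filter.atTop (nhds α₀) →
          A α₀ = ⋂ k : ℕ, A (a k)) ∧
       (A 0 = closure (⋃ α ∈ Set.Ioc (0:ℝ) 1, A α)))) ∧
    (∀ u : EuclideanSpace ℝ (Fin n) → ℝ,
      IsFuzzyVector u → (∀ α ∈ Set.Icc (0:ℝ) 1, levelSet u α = A α) →
      ∀ t, u t = sSup {α : ℝ | α ∈ Set.Icc (0:ℝ) 1 ∧ t ∈ A α}) := by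
  refine ⟨⟨fun ⟨u, ⟨hu, hA⟩, _⟩ => ?_, fun (hA : IsLevelFamily A) => ?_⟩, fun u hu hA t => ?_⟩
  · exact hu.isLevelFamily_levelSet.congr hA
  · exact ⟨fuzzyOfLevels A, ⟨hA.isFuzzyVector_fuzzyOfLevels, fun α => hA.levelSet_fuzzyOfLevels⟩,
      fun v ⟨hv, hvA⟩ => hv.eq_fuzzyOfLevels hvA⟩
  · exact congrFun (hu.eq_fuzzyOfLevels hA) t
end
end

section
/- Let v, w be fuzzy vectors on ℝⁿ with each level set w_α a closed ball centered at the origin (i.e., w symmetric). Then (v ⊕ w)_α = v_α + B_{λ_α} for all α ∈ [0,1], where λ_α is the radius of w_α, and consequently v_α is a regular inner parallel body of (v ⊕ w)_α: v_α = {t : t + B_{λ_α} ⊆ (v ⊕ w)_α} and (v ⊕ w)_α = v_α + B_{λ_α}. -/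
open scoped RealInnerProductSpace Pointwise

noncomputable section

/-!
Zadeh addition acts levelwise as Minkowski addition: for `α > 0` a near-optimal splitting
`t = r + (t - r)` converges along a subsequence by compactness of the support, and upper
semicontinuity puts the limit in the level sets; for `α = 0` the sum of the two compact closures
is closed. So `(v ⊕ w)_α = v_α + B_λ`, and a closed convex set is recovered from its sum with `B_λ`
by separating any outside point with a hyperplane.
-/

open Set Filter Topology Metric

section InnerParallelBody

variable {E : Type*} [NormedAddCommGroup E] [InnerProductSpace ℝ E] [CompleteSpace E]

def innerParallelBody (A : Set E) (r : ℝ) : Set E :=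
  {t | ∀ b ∈ closedBall (0 : E) r, t + b ∈ A}

/-- Separate `t ∉ A` from `A` by a functional `⟪y, ·⟫`; translating `t` by `r • y / ‖y‖` raises that
functional by `r ‖y‖`, which no point of `B_r` can compensate. -/
theorem innerParallelBody_add_closedBall {A : Set E} (hA : Convex ℝ A) (hAc : IsClosed A)
    {r : ℝ} (hr : 0 ≤ r) : innerParallelBody (A + closedBall 0 r) r = A := by
  refine Subset.antisymm (fun t ht => ?_) fun t ht b hb => add_mem_add ht hb
  by_contra htA
  obtain ⟨f, u, hfA, hft⟩ := geometric_hahn_banach_closed_point hA hAc htA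
  set y : E := (InnerProductSpace.toDual ℝ E).symm f
  have hfy : ∀ z, f z = ⟪y, z⟫ := fun z => InnerProductSpace.toDual_symm_apply.symm
  have hb : (r / ‖y‖) • y ∈ closedBall (0 : E) r := by
    rcases eq_or_ne ‖y‖ 0 with hy | hy
    · simpa [hy] using hr
    · rw [mem_closedBall_zero_iff, norm_smul, Real.norm_of_nonneg (by positivity),
        div_mul_cancel₀ _ hy]
  obtain ⟨p, hp, q, hq, hpq⟩ := ht _ hb
  have hfq : f q ≤ r * ‖y‖ := by
    rw [hfy, mul_comm]
    exact (real_inner_le_norm y q).trans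
      (mul_le_mul_of_nonneg_left (mem_closedBall_zero_iff.1 hq) (norm_nonneg y))
  have hfb : f ((r / ‖y‖) • y) = r * ‖y‖ := by
    rw [hfy, real_inner_smul_right, real_inner_self_eq_norm_sq]
    rcases eq_or_ne ‖y‖ 0 with hy | hy
    · simp [hy]
    · field_simp
  have hfpq := congrArg f hpq
  rw [map_add, map_add, hfb] at hfpq
  linarith [hfA p hp]

end InnerParallelBody

section Semicontinuity

variable {X ι : Type*} [TopologicalSpace X]

theorem le_of_tendsto_of_isClosed_superlevel {u : X → ℝ} (hu : ∀ β, IsClosed {x | β ≤ u x})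
    {l : Filter ι} [l.NeBot] {x : ι → X} {x₀ : X} {β : ι → ℝ} {α : ℝ}
    (hx : Tendsto x l (𝓝 x₀)) (hβ : Tendsto β l (𝓝 α)) (h : ∀ k, β k ≤ u (x k)) :
    α ≤ u x₀ := by
  by_contra! hlt
  obtain ⟨γ, hγx, hγα⟩ := exists_between hlt
  have hγu : γ ≤ u x₀ :=
    (hu γ).mem_of_tendsto hx ((hβ.eventually (lt_mem_nhds hγα)).mono fun k hk => hk.le.trans (h k))
  exact not_le.2 hγx hγu

end Semicontinuity

section Fuzzy

variable {n : ℕ} {v w : EuclideanSpace ℝ (Fin n) → ℝ}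

theorem IsFuzzyVector.bddAbove_range (hv : IsFuzzyVector v) : BddAbove (range v) :=
  ⟨1, forall_mem_range.2 fun t => (hv.1 t).2⟩

theorem IsFuzzyVector.quasiconcaveOn_s14 (hv : IsFuzzyVector v) : QuasiconcaveOn ℝ univ v :=
  quasiconcaveOn_iff_min_le.2 ⟨convex_univ, fun x _ y _ a b ha hb hab => by
    simpa [← hab] using hv.2.2.2.1 x y a ⟨ha, by linarith⟩⟩

theorem IsFuzzyVector.isClosed_levelSet (hv : IsFuzzyVector v) (α : ℝ) :
    IsClosed (levelSet v α) := by
  unfold levelSet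
  split_ifs
  exacts [isClosed_closure, hv.2.2.2.2 α]

theorem IsFuzzyVector.convex_levelSet_s14 (hv : IsFuzzyVector v) (α : ℝ) :
    Convex ℝ (levelSet v α) := by
  unfold levelSet
  split_ifs
  · simpa using (hv.quasiconcaveOn_s14.convex_gt 0).closure
  · simpa using hv.quasiconcaveOn_s14 α

theorem min_le_fuzzyAdd (hv : BddAbove (range v)) (r s : EuclideanSpace ℝ (Fin n)) :
    min (v r) (w s) ≤ fuzzyAdd v w (r + s) := by
  refine le_csSup ⟨hv.choose, ?_⟩ ⟨r, s, rfl, rfl⟩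
  rintro m ⟨r', s', -, rfl⟩
  exact (min_le_left _ _).trans (hv.choose_spec (mem_range_self r'))

theorem exists_lt_min_of_lt_fuzzyAdd {β : ℝ} {t : EuclideanSpace ℝ (Fin n)}
    (h : β < fuzzyAdd v w t) : ∃ r, β < min (v r) (w (t - r)) := by
  obtain ⟨m, ⟨r, s, rfl, rfl⟩, hm⟩ :=
    exists_lt_of_lt_csSup (s := {m | ∃ r s, r + s = t ∧ m = min (v r) (w s)})
      ⟨_, 0, t, zero_add t, rfl⟩ h
  exact ⟨r, by rwa [add_sub_cancel_left]⟩

theorem setOf_lt_fuzzyAdd (hv : BddAbove (range v)) (β : ℝ) :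
    {t | β < fuzzyAdd v w t} = {t | β < v t} + {t | β < w t} := by
  ext t
  constructor
  · intro ht
    obtain ⟨r, hr⟩ := exists_lt_min_of_lt_fuzzyAdd ht
    exact ⟨r, (lt_min_iff.1 hr).1, t - r, (lt_min_iff.1 hr).2, add_sub_cancel r t⟩
  · rintro ⟨r, hr, s, hs, rfl⟩
    exact (lt_min hr hs).trans_le (min_le_fuzzyAdd hv r s)

/-- Approximate `α` from below by `β k`, pick `r k` with `β k < min (v (r k)) (w (t - r k))`, and
pass to a limit along a convergent subsequence using compactness of the support of `v`. -/
theorem setOf_le_fuzzyAdd (hv : IsFuzzyVector v) (hw : IsFuzzyVector w) {α : ℝ} (hα : 0 < α) :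
    {t | α ≤ fuzzyAdd v w t} = {t | α ≤ v t} + {t | α ≤ w t} := by
  ext t
  constructor
  · intro ht
    obtain ⟨β, -, hβα, hβ⟩ := exists_seq_strictMono_tendsto' hα
    choose r hr using fun k => exists_lt_min_of_lt_fuzzyAdd ((hβα k).2.trans_le ht)
    have hr_supp : ∀ k, r k ∈ closure {x | 0 < v x} := fun k =>
      subset_closure ((hβα k).1.trans ((hr k).trans_le (min_le_left _ _)))
    obtain ⟨r₀, -, φ, hφ, hrφ⟩ := hv.2.2.1.tendsto_subseq hr_supp
    have hβφ := hβ.comp hφ.tendsto_atTop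
    refine ⟨r₀, ?_, t - r₀, ?_, add_sub_cancel r₀ t⟩
    · exact le_of_tendsto_of_isClosed_superlevel hv.2.2.2.2 hrφ hβφ
        fun k => ((hr (φ k)).trans_le (min_le_left _ _)).le
    · exact le_of_tendsto_of_isClosed_superlevel hw.2.2.2.2 (tendsto_const_nhds.sub hrφ) hβφ
        fun k => ((hr (φ k)).trans_le (min_le_right _ _)).le
  · rintro ⟨r, hr, s, hs, rfl⟩
    exact (le_min hr hs).trans (min_le_fuzzyAdd hv.bddAbove_range r s)

theorem closure_setOf_pos_fuzzyAdd (hv : IsFuzzyVector v) (hw : IsFuzzyVector w) :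
    closure {t | 0 < fuzzyAdd v w t} = closure {t | 0 < v t} + closure {t | 0 < w t} := by
  rw [setOf_lt_fuzzyAdd hv.bddAbove_range]
  refine Subset.antisymm ?_ ?_
  · exact closure_minimal (add_subset_add subset_closure subset_closure)
      (hv.2.2.1.add hw.2.2.1).isClosed
  · exact add_subset_iff.2 fun _ ha _ hb =>
      map_mem_closure₂ continuous_add ha hb fun _ ha' _ hb' => add_mem_add ha' hb'

theorem levelSet_fuzzyAdd (hv : IsFuzzyVector v) (hw : IsFuzzyVector w) {α : ℝ} (hα : 0 ≤ α) :
    levelSet (fuzzyAdd v w) α = levelSet v α + levelSet w α := by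
  unfold levelSet
  split_ifs with h
  · exact closure_setOf_pos_fuzzyAdd hv hw
  · exact setOf_le_fuzzyAdd hv hw (hα.lt_of_ne' h)

end Fuzzy

theorem stmt14_general {n : ℕ} (v w : EuclideanSpace ℝ (Fin n) → ℝ)
    (hv : IsFuzzyVector v) (hw : IsFuzzyVector w) :
    ∀ α ∈ Set.Icc (0:ℝ) 1, ∀ lam : ℝ, 0 ≤ lam →
      levelSet w α = Metric.closedBall 0 lam →
      levelSet (fuzzyAdd v w) α = levelSet v α + Metric.closedBall 0 lam ∧
      levelSet v α =
        {t : EuclideanSpace ℝ (Fin n) |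
          ∀ b ∈ Metric.closedBall (0 : EuclideanSpace ℝ (Fin n)) lam,
            t + b ∈ levelSet (fuzzyAdd v w) α} := by
  intro α hα lam hlam hw_ball
  have hsum : levelSet (fuzzyAdd v w) α = levelSet v α + closedBall 0 lam := by
    rw [levelSet_fuzzyAdd hv hw hα.1, hw_ball]
  refine ⟨hsum, ?_⟩
  rw [hsum]
  exact (innerParallelBody_add_closedBall (hv.convex_levelSet_s14 α) (hv.isClosed_levelSet α) hlam).symm

theorem stmt14 {n : ℕ} (v w : EuclideanSpace ℝ (Fin n) → ℝ)
    (hv : IsFuzzyVector v) (hw : IsFuzzyVector w)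
    (hsym : ∀ α ∈ Set.Icc (0:ℝ) 1, ∃ lam : ℝ, 0 ≤ lam ∧
      levelSet w α = Metric.closedBall 0 lam) :
    ∀ α ∈ Set.Icc (0:ℝ) 1, ∀ lam : ℝ, 0 ≤ lam →
      levelSet w α = Metric.closedBall 0 lam →
      levelSet (fuzzyAdd v w) α = levelSet v α + Metric.closedBall 0 lam ∧
      levelSet v α =
        {t : EuclideanSpace ℝ (Fin n) |
          ∀ b ∈ Metric.closedBall (0 : EuclideanSpace ℝ (Fin n)) lam,
            t + b ∈ levelSet (fuzzyAdd v w) α} :=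
  stmt14_general v w hv hw
end
end

section
/- For a nonempty compact convex set A ⊆ ℝⁿ, the set Λ_A = {λ ≥ 0 : A = A_{−λ} + B_λ} of distances at which A has a regular inner parallel body is a closed interval [0, λ_A], where λ_A = sup Λ_A. In particular, A = A_{−λ_A} + B_{λ_A}, and if 0 ≤ λ′ < λ with λ ∈ Λ_A then λ′ ∈ Λ_A. -/
/-!
Since `B_λ = B_{λ-μ} + B_μ` and `A_{-λ} + B_{λ-μ} ⊆ A_{-μ}` for `μ ≤ λ`, the set `Λ_A` is an
interval starting at `0`. It is bounded because `A_{-λ} + B_λ = A` forces a ball of radius `λ`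
into `A`, so `2λ ≤ diam A`. It is closed by compactness: for `λₖ → λ` in `Λ_A` and `a ∈ A`,
points `tₖ ∈ A_{-λₖ}` within `λₖ` of `a` have a limit point `t ∈ A_{-λ}` within `λ` of `a`.
-/

open scoped RealInnerProductSpace Pointwise

noncomputable section

/-- The support function of a subset of ℝⁿ. -/
def suppFn {n : ℕ} (A : Set (EuclideanSpace ℝ (Fin n)))
    (x : EuclideanSpace ℝ (Fin n)) : ℝ :=
  sSup ((fun a => ⟪a, x⟫) '' A)

/-- The inner parallel body of `A` at distance `lam`:
`A₋λ = {t | t + B_λ ⊆ A}`. -/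
def innerParallel {n : ℕ} (A : Set (EuclideanSpace ℝ (Fin n))) (lam : ℝ) :
    Set (EuclideanSpace ℝ (Fin n)) :=
  {t | ∀ b ∈ Metric.closedBall (0 : EuclideanSpace ℝ (Fin n)) lam, t + b ∈ A}

/-- The set of distances at which `A` has a regular inner parallel body. -/
def regSet {n : ℕ} (A : Set (EuclideanSpace ℝ (Fin n))) : Set ℝ :=
  {lam | 0 ≤ lam ∧ A = innerParallel A lam + Metric.closedBall 0 lam}

/-- A convex body is irreducible if it has no non-trivial regular inner
parallel body. -/
def IrredBody {n : ℕ} (B : Set (EuclideanSpace ℝ (Fin n))) : Prop :=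
  ∀ lam : ℝ, 0 ≤ lam →
    B = innerParallel B lam + Metric.closedBall 0 lam → lam = 0

open Filter Topology Metric Set

section InnerParallel

variable {n : ℕ} {A : Set (EuclideanSpace ℝ (Fin n))}

lemma innerParallel_zero (A : Set (EuclideanSpace ℝ (Fin n))) : innerParallel A 0 = A := by
  ext t
  simp [innerParallel]

lemma innerParallel_subset {lam : ℝ} (hlam : 0 ≤ lam) : innerParallel A lam ⊆ A :=
  fun t ht => by simpa using ht 0 (mem_closedBall_self hlam)

lemma closedBall_subset_of_mem_innerParallel {lam : ℝ} {t : EuclideanSpace ℝ (Fin n)}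
    (ht : t ∈ innerParallel A lam) : closedBall t lam ⊆ A := fun x hx => by
  simpa using ht (x - t) (by rwa [mem_closedBall_zero_iff, ← dist_eq_norm])

lemma innerParallel_add_closedBall_subset (A : Set (EuclideanSpace ℝ (Fin n))) (lam : ℝ) :
    innerParallel A lam + closedBall 0 lam ⊆ A := by
  rintro _ ⟨t, ht, b, hb, rfl⟩
  exact ht b hb

lemma mem_innerParallel_add_closedBall_iff {lam : ℝ} {a : EuclideanSpace ℝ (Fin n)} :
    a ∈ innerParallel A lam + closedBall 0 lam ↔ ∃ t ∈ innerParallel A lam, dist a t ≤ lam := by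
  constructor
  · rintro ⟨t, ht, b, hb, rfl⟩
    exact ⟨t, ht, by simpa [dist_eq_norm] using hb⟩
  · rintro ⟨t, ht, hdist⟩
    exact ⟨t, ht, a - t, by rwa [mem_closedBall_zero_iff, ← dist_eq_norm], add_sub_cancel t a⟩

lemma innerParallel_add_closedBall_sub_subset (lam mu : ℝ) :
    innerParallel A lam + closedBall 0 (lam - mu) ⊆ innerParallel A mu := by
  rintro _ ⟨t, ht, c, hc, rfl⟩ b hb
  rw [add_assoc]
  apply ht
  rw [mem_closedBall_zero_iff] at *
  linarith [norm_add_le c b]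

lemma mem_innerParallel_of_tendsto {ι : Type*} {l : Filter ι} [l.NeBot] (hA : IsClosed A)
    {t : ι → EuclideanSpace ℝ (Fin n)} {u : ι → ℝ} {t₀ : EuclideanSpace ℝ (Fin n)} {s : ℝ}
    (ht : Tendsto t l (𝓝 t₀)) (hu : Tendsto u l (𝓝 s)) (hs : 0 < s)
    (hmem : ∀ i, t i ∈ innerParallel A (u i)) : t₀ ∈ innerParallel A s := by
  intro c hc
  rw [mem_closedBall_zero_iff] at hc
  -- `(u i / s) • c` lies in `B_{u i}` and tends to `c`
  have hscaled : Tendsto (fun i => t i + (u i / s) • c) l (𝓝 (t₀ + c)) := by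
    have hratio : Tendsto (fun i => u i / s) l (𝓝 1) := by
      simpa [div_self hs.ne'] using hu.div_const s
    simpa using ht.add (hratio.smul_const c)
  refine hA.mem_of_tendsto hscaled ?_
  filter_upwards [hu.eventually (lt_mem_nhds hs)] with i hui
  apply hmem i
  rw [mem_closedBall_zero_iff, norm_smul, Real.norm_of_nonneg (div_nonneg hui.le hs.le)]
  calc u i / s * ‖c‖ ≤ u i / s * s := by gcongr
    _ = u i := div_mul_cancel₀ _ hs.ne'

end InnerParallel

section RegSet

variable {n : ℕ} {A : Set (EuclideanSpace ℝ (Fin n))}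

lemma zero_mem_regSet (A : Set (EuclideanSpace ℝ (Fin n))) : (0 : ℝ) ∈ regSet A :=
  ⟨le_rfl, by simp [innerParallel_zero]⟩

lemma mem_regSet_of_le {lam mu : ℝ} (hlam : lam ∈ regSet A) (hmu : 0 ≤ mu) (hle : mu ≤ lam) :
    mu ∈ regSet A := by
  refine ⟨hmu, (innerParallel_add_closedBall_subset A mu).antisymm' ?_⟩
  calc A = innerParallel A lam + closedBall 0 lam := hlam.2
    _ = innerParallel A lam + closedBall 0 (lam - mu) + closedBall 0 mu := by
      rw [add_assoc, closedBall_add_closedBall (sub_nonneg.2 hle) hmu, add_zero, sub_add_cancel]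
    _ ⊆ innerParallel A mu + closedBall 0 mu :=
      add_subset_add_right (innerParallel_add_closedBall_sub_subset lam mu)

lemma two_mul_le_diam_of_mem_regSet (hn : 0 < n) (hA : Bornology.IsBounded A) (hne : A.Nonempty)
    {lam : ℝ} (hlam : lam ∈ regSet A) : 2 * lam ≤ diam A := by
  obtain ⟨t, ht⟩ : (innerParallel A lam).Nonempty := by
    rw [hlam.2] at hne
    exact hne.of_add_left
  have : Nonempty (Fin n) := ⟨⟨0, hn⟩⟩
  rw [← diam_closedBall_eq t hlam.1]
  exact diam_mono (closedBall_subset_of_mem_innerParallel ht) hA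

lemma bddAbove_regSet (hn : 0 < n) (hA : Bornology.IsBounded A) (hne : A.Nonempty) :
    BddAbove (regSet A) :=
  ⟨diam A / 2, fun _ hlam => by linarith [two_mul_le_diam_of_mem_regSet hn hA hne hlam]⟩

lemma mem_regSet_of_tendsto (hA : IsCompact A) {u : ℕ → ℝ} {s : ℝ} (hu : ∀ k, u k ∈ regSet A)
    (hlim : Tendsto u atTop (𝓝 s)) (hs : 0 < s) : s ∈ regSet A := by
  refine ⟨hs.le, subset_antisymm (fun a ha => ?_) (innerParallel_add_closedBall_subset A s)⟩
  have hnear : ∀ k, ∃ t ∈ innerParallel A (u k), dist a t ≤ u k := fun k =>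
    mem_innerParallel_add_closedBall_iff.1 ((hu k).2 ▸ ha)
  choose t ht hdist using hnear
  obtain ⟨t₀, -, φ, hφ, htφ⟩ :=
    hA.tendsto_subseq fun k => innerParallel_subset (hu k).1 (ht k)
  have huφ := hlim.comp hφ.tendsto_atTop
  refine mem_innerParallel_add_closedBall_iff.2
    ⟨t₀, mem_innerParallel_of_tendsto hA.isClosed htφ huφ hs fun k => ht (φ k), ?_⟩
  exact le_of_tendsto_of_tendsto' (tendsto_const_nhds.dist htφ) huφ fun k => hdist (φ k)

lemma isClosed_regSet (hA : IsCompact A) : IsClosed (regSet A) := by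
  refine isClosed_of_closure_subset fun s hs => ?_
  obtain ⟨u, hu, hlim⟩ := mem_closure_iff_seq_limit.1 hs
  rcases (ge_of_tendsto' hlim fun k => (hu k).1).eq_or_lt with rfl | hs
  · exact zero_mem_regSet A
  · exact mem_regSet_of_tendsto hA hu hlim hs

end RegSet

theorem stmt17_general {n : ℕ} (hn : 0 < n) (A : Set (EuclideanSpace ℝ (Fin n)))
    (hne : A.Nonempty) (hcomp : IsCompact A) :
    regSet A = Set.Icc 0 (sSup (regSet A)) ∧
    A = innerParallel A (sSup (regSet A)) +
      Metric.closedBall 0 (sSup (regSet A)) := by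
  have hbdd := bddAbove_regSet hn hcomp.isBounded hne
  have hsup : sSup (regSet A) ∈ regSet A :=
    (isClosed_regSet hcomp).csSup_mem ⟨0, zero_mem_regSet A⟩ hbdd
  refine ⟨subset_antisymm (fun lam hlam => ⟨hlam.1, le_csSup hbdd hlam⟩) ?_, hsup.2⟩
  exact fun lam hlam => mem_regSet_of_le hsup hlam.1 hlam.2

theorem stmt17 {n : ℕ} (hn : 0 < n) (A : Set (EuclideanSpace ℝ (Fin n)))
    (hne : A.Nonempty) (hcomp : IsCompact A) (hconv : Convex ℝ A) :
    regSet A = Set.Icc 0 (sSup (regSet A)) ∧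
    A = innerParallel A (sSup (regSet A)) +
      Metric.closedBall 0 (sSup (regSet A)) :=
  stmt17_general hn A hne hcomp
end
end

section
/- Let u be a fuzzy vector on ℝⁿ whose 0-level set u_0 is an irreducible convex body. Then u is skew: whenever u = v ⊕ w with w a symmetric fuzzy vector, w must be the crisp fuzzy vector concentrated at the origin (w(o) = 1 and w(t) = 0 for t ≠ o). -/
/-!
Zadeh addition adds supports, so for compactly supported summands the 0-level sets add:
`u₀ = v₀ + w₀`. If `w` is symmetric then `w₀` is a closed ball `B_λ`, and `v₀` lies in the inner
parallel body of `u₀ = v₀ + B_λ` at distance `λ`; irreducibility of `u₀` forces `λ = 0`. Hence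
the support of `w` is `{o}`, and regularity of `w` gives `w(o) = 1`.
-/

open scoped RealInnerProductSpace Pointwise

noncomputable section

theorem closure_add_of_isCompact_closure {G : Type*} [TopologicalSpace G] [Add G]
    [ContinuousAdd G] [T2Space G] {s t : Set G} (hs : IsCompact (closure s))
    (ht : IsCompact (closure t)) :
    closure (s + t) = closure s + closure t := by
  refine (closure_minimal ?_ (hs.add ht).isClosed).antisymm ?_
  · exact Set.add_subset_add subset_closure subset_closure
  · rintro _ ⟨x, hx, y, hy, rfl⟩
    exact map_mem_closure₂ continuous_add hx hy fun a ha b hb =>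
      Set.add_mem_add ha hb

section FuzzyVector

variable {n : ℕ}

theorem setOf_pos_fuzzyAdd {v w : EuclideanSpace ℝ (Fin n) → ℝ} (hv : BddAbove (Set.range v)) :
    {t | 0 < fuzzyAdd v w t} = {t | 0 < v t} + {t | 0 < w t} := by
  ext t
  set S := {m : ℝ | ∃ r s, r + s = t ∧ m = min (v r) (w s)}
  have hS : BddAbove S := by
    obtain ⟨M, hM⟩ := hv
    exact ⟨M, by rintro _ ⟨r, s, -, rfl⟩; exact (min_le_left _ _).trans (hM ⟨r, rfl⟩)⟩
  constructor
  · intro ht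
    obtain ⟨_, ⟨r, s, hrs, rfl⟩, hpos⟩ :=
      exists_lt_of_lt_csSup (⟨_, t, 0, add_zero t, rfl⟩ : S.Nonempty) (show 0 < sSup S from ht)
    exact ⟨r, (lt_min_iff.mp hpos).1, s, (lt_min_iff.mp hpos).2, hrs⟩
  · rintro ⟨r, hr, s, hs, rfl⟩
    exact (lt_min hr hs).trans_le (le_csSup hS ⟨r, s, rfl, rfl⟩)

theorem levelSet_fuzzyAdd_zero {v w : EuclideanSpace ℝ (Fin n) → ℝ} (hv : IsFuzzyVector v)
    (hw : IsFuzzyVector w) :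
    levelSet (fuzzyAdd v w) 0 = levelSet v 0 + levelSet w 0 := by
  have hv_bdd : BddAbove (Set.range v) := ⟨1, by rintro _ ⟨t, rfl⟩; exact (hv.1 t).2⟩
  simp only [levelSet, if_true, setOf_pos_fuzzyAdd hv_bdd]
  exact closure_add_of_isCompact_closure hv.2.2.1 hw.2.2.1

theorem IrredBody.eq_zero_of_eq_add_closedBall {A B : Set (EuclideanSpace ℝ (Fin n))} {lam : ℝ}
    (hA : IrredBody A) (hlam : 0 ≤ lam) (hAB : A = B + Metric.closedBall 0 lam) : lam = 0 := by
  refine hA lam hlam (le_antisymm ?_ ?_)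
  · -- `B ⊆ innerParallel A lam`
    refine hAB.trans_le (Set.add_subset_add (fun x hx b hb => ?_) le_rfl)
    exact hAB ▸ Set.add_mem_add hx hb
  · rintro _ ⟨x, hx, b, hb, rfl⟩
    exact hx b hb

open Classical in
theorem eq_ite_of_levelSet_zero_eq_singleton {w : EuclideanSpace ℝ (Fin n) → ℝ}
    (hw_nonneg : ∀ t, 0 ≤ w t) (hw_one : ∃ t, w t = 1) (hw : levelSet w 0 = {0}) (t) :
    w t = if t = 0 then 1 else 0 := by
  have hsupp : ∀ s, 0 < w s → s = 0 := fun s hs => by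
    have hcl : closure {t | 0 < w t} = {0} := by simpa only [levelSet, if_true] using hw
    simpa only [hcl, Set.mem_singleton_iff] using subset_closure (s := {t | 0 < w t}) hs
  split_ifs with ht
  · obtain ⟨t₀, ht₀⟩ := hw_one
    rw [ht, ← hsupp t₀ (ht₀ ▸ one_pos), ht₀]
  · exact le_antisymm (not_lt.mp fun hpos => ht (hsupp t hpos)) (hw_nonneg t)

end FuzzyVector

open Classical in
theorem stmt19_general {n : ℕ} (u : EuclideanSpace ℝ (Fin n) → ℝ)
    (hirr : IrredBody (levelSet u 0)) :
    ∀ v w : EuclideanSpace ℝ (Fin n) → ℝ,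
      IsFuzzyVector v → IsFuzzyVector w →
      (∀ α ∈ Set.Icc (0:ℝ) 1, ∃ lam : ℝ, 0 ≤ lam ∧
        levelSet w α = Metric.closedBall 0 lam) →
      u = fuzzyAdd v w →
      ∀ t, w t = if t = (0 : EuclideanSpace ℝ (Fin n)) then 1 else 0 := by
  rintro v w hv hw hsym rfl
  obtain ⟨lam, hlam, hball⟩ := hsym 0 ⟨le_rfl, zero_le_one⟩
  have hsum : levelSet (fuzzyAdd v w) 0 = levelSet v 0 + Metric.closedBall 0 lam := by
    rw [levelSet_fuzzyAdd_zero hv hw, hball]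
  have hlam0 : lam = 0 := hirr.eq_zero_of_eq_add_closedBall hlam hsum
  rw [hlam0, Metric.closedBall_zero] at hball
  exact eq_ite_of_levelSet_zero_eq_singleton (fun t => (hw.1 t).1) hw.2.1 hball

open Classical in
theorem stmt19 {n : ℕ} (u : EuclideanSpace ℝ (Fin n) → ℝ)
    (hu : IsFuzzyVector u) (hirr : IrredBody (levelSet u 0)) :
    ∀ v w : EuclideanSpace ℝ (Fin n) → ℝ,
      IsFuzzyVector v → IsFuzzyVector w →
      (∀ α ∈ Set.Icc (0:ℝ) 1, ∃ lam : ℝ, 0 ≤ lam ∧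
        levelSet w α = Metric.closedBall 0 lam) →
      u = fuzzyAdd v w →
      ∀ t, w t = if t = (0 : EuclideanSpace ℝ (Fin n)) then 1 else 0 :=
  stmt19_general u hirr
end
end
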